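/- Fix δ ∈ (0,1), ε ∈ [0,1), constants σ > 0, λ̲ > 0, λ̄ > 0, integers k ≥ D ≥ 1, a deterministic matrix A ∈ ℝ^{k×D} with rows a_1,…,a_k ∈ ℝ^D satisfying conditions (C1)–(C3), and a deterministic bias vector b ∈ ℝ^k. There exists a constant c(δ) > 0 depending only on δ such that: if ( λ̄·√((D/k)·log(ek/D)) + ε·σ·√(D/k) ) / ( λ̲·(1−ε) ) ≤ c(δ) and 8·((1/k)Σ_{i=1}^k |b_i|) / ( λ̲·(1−ε) ) < 1, then with probability at least 1 − δ over the noise, every minimizer v̂ of v ↦ ‖η − A v‖₁ over ℝ^D satisfies ‖v̂ − v*‖₂ ≤ 4·((1/k)Σ_{i=1}^k |b_i|) / ( λ̲·(1−ε) ). -/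
import Mathlib

open MeasureTheory ProbabilityTheory Real

noncomputable section

def dot {k : ℕ} (x y : Fin k → ℝ) : ℝ := ∑ i, x i * y i

def l2norm {k : ℕ} (x : Fin k → ℝ) : ℝ := Real.sqrt (∑ i, x i ^ 2)

def mixture (ε : ℝ) (Q : Measure ℝ) : Measure ℝ :=
  ENNReal.ofReal (1 - ε) • Measure.dirac 0 + ENNReal.ofReal ε • Q

namespace Stmt10

def sg (b : Bool) : ℝ := if b then 1 else -1

lemma sg_abs (b : Bool) : |sg b| = 1 := by cases b <;> simp [sg]

lemma sg_sq (b : Bool) : sg b * sg b = 1 := by cases b <;> norm_num [sg]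

lemma sg_not (b : Bool) : sg (!b) = - sg b := by cases b <;> simp [sg]

lemma bdd_of_le {α : Type*} {U : Set α} {F : α → ℝ} {C : ℝ}
    (h : ∀ u ∈ U, F u ≤ C) : BddAbove (F '' U) := by
  refine ⟨C, ?_⟩; rintro y ⟨u, hu, rfl⟩; exact h u hu

lemma le_of_sq_le_sq {a b : ℝ} (hb : 0 ≤ b) (h : a ^ 2 ≤ b ^ 2) : a ≤ b := by
  nlinarith [abs_nonneg a, le_abs_self a, sq_abs a]

lemma dot_le {n : ℕ} (x y : Fin n → ℝ) : |dot x y| ≤ l2norm x * l2norm y := by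
  rw [dot, l2norm, l2norm, ← Real.sqrt_sq_eq_abs, ← Real.sqrt_mul (by positivity)]
  exact Real.sqrt_le_sqrt (Finset.sum_mul_sq_le_sq_mul_sq _ _ _)

lemma pair_csSup {α : Type*} {U : Set α} (hU : U.Nonempty) (f g : α → ℝ)
    (h1 : BddAbove ((fun u => f u + g u) '' U))
    (h2 : BddAbove ((fun u => -f u + g u) '' U)) :
    sSup ((fun u => |f u| + g u) '' U) + sSup ((fun u => -|f u| + g u) '' U)
      ≤ sSup ((fun u => f u + g u) '' U) + sSup ((fun u => -f u + g u) '' U) := by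
  set T1 := sSup ((fun u => f u + g u) '' U) with hT1
  set T2 := sSup ((fun u => -f u + g u) '' U) with hT2
  have key : ∀ u ∈ U, ∀ u' ∈ U, (|f u| + g u) + (-|f u'| + g u') ≤ T1 + T2 := by
    intro u hu u' hu'
    rcases le_or_gt 0 (f u) with hf | hf
    · have e1 : |f u| + g u ≤ T1 := by
        rw [abs_of_nonneg hf]; exact le_csSup h1 ⟨u, hu, rfl⟩
      have e2 : -f u' + g u' ≤ T2 := le_csSup h2 ⟨u', hu', rfl⟩
      have e3 : -|f u'| ≤ -f u' := neg_le_neg (le_abs_self _)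
      linarith
    · have e1 : |f u| + g u ≤ T2 := by
        rw [abs_of_neg hf]; exact le_csSup h2 ⟨u, hu, rfl⟩
      have e2 : f u' + g u' ≤ T1 := le_csSup h1 ⟨u', hu', rfl⟩
      have e3 : -|f u'| ≤ f u' := neg_abs_le _
      linarith
  have h5 : sSup ((fun u => |f u| + g u) '' U) ≤ T1 + T2 - sSup ((fun u => -|f u| + g u) '' U) := by
    apply csSup_le (hU.image _)
    rintro y ⟨u, hu, rfl⟩
    rw [le_sub_iff_add_le, add_comm, ← le_sub_iff_add_le]
    apply csSup_le (hU.image _)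
    rintro y' ⟨u', hu', rfl⟩
    rw [le_sub_iff_add_le]
    show -|f u'| + g u' + (|f u| + g u) ≤ T1 + T2
    linarith [key u hu u' hu']
  linarith

lemma flip_invol {k : ℕ} (j : Fin k) :
    Function.Involutive (fun s : Fin k → Bool => Function.update s j (!(s j))) := by
  intro s; funext i
  rcases eq_or_ne i j with rfl | h
  · simp [Function.update_self]
  · simp [Function.update_of_ne h]

lemma contraction {k : ℕ} {α : Type*} {U : Set α} (hU : U.Nonempty)
    (x : Fin k → α → ℝ) (B : Fin k → ℝ)
    (hB : ∀ i, ∀ u ∈ U, |x i u| ≤ B i) :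
    ∑ s : Fin k → Bool, sSup ((fun u => ∑ i, sg (s i) * |x i u|) '' U)
      ≤ ∑ s : Fin k → Bool, sSup ((fun u => ∑ i, sg (s i) * x i u) '' U) := by
  classical
  set mt : Finset (Fin k) → Fin k → α → ℝ :=
    fun J i u => if i ∈ J then x i u else |x i u| with hmt
  set Φ : Finset (Fin k) → ℝ := fun J =>
    ∑ s : Fin k → Bool, sSup ((fun u => ∑ i, sg (s i) * mt J i u) '' U) with hΦ
  have main : ∀ J : Finset (Fin k), Φ ∅ ≤ Φ J := by
    intro J
    induction J using Finset.induction_on with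
    | empty => exact le_refl _
    | @insert j J hj ih =>
      refine ih.trans ?_
      -- one-step
      set flip : (Fin k → Bool) → (Fin k → Bool) :=
        fun s => Function.update s j (!(s j)) with hflip
      have hinv : Function.Involutive flip := flip_invol j
      have hbij : Function.Bijective flip := hinv.bijective
      set g : (Fin k → Bool) → α → ℝ :=
        fun s u => ∑ i ∈ Finset.univ.erase j, sg (s i) * mt J i u with hg
      have hgbound : ∀ s, ∀ u ∈ U, |g s u| ≤ ∑ i ∈ Finset.univ.erase j, B i := by
        intro s u hu
        refine (Finset.abs_sum_le_sum_abs _ _).trans (Finset.sum_le_sum ?_)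
        intro i _
        simp only [hmt]
        rw [abs_mul, sg_abs, one_mul]
        by_cases hiJ : i ∈ J
        · rw [if_pos hiJ]; exact hB i u hu
        · rw [if_neg hiJ, abs_abs]; exact hB i u hu
      set Bg : ℝ := ∑ i ∈ Finset.univ.erase j, B i with hBg
      have hxb : ∀ u ∈ U, x j u ≤ B j := fun u hu => (le_abs_self _).trans (hB j u hu)
      have hxb' : ∀ u ∈ U, -x j u ≤ B j := fun u hu => (neg_le_abs _).trans (hB j u hu)
      -- decompositions
      have hdecJ : ∀ s u, (∑ i, sg (s i) * mt J i u) = sg (s j) * |x j u| + g s u := by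
        intro s u
        rw [hg, ← Finset.add_sum_erase _ _ (Finset.mem_univ j)]
        congr 1
        rw [hmt]; simp [hj]
      have hdecJ' : ∀ s u, (∑ i, sg (s i) * mt (insert j J) i u) = sg (s j) * x j u + g s u := by
        intro s u
        rw [hg, ← Finset.add_sum_erase _ _ (Finset.mem_univ j)]
        congr 1
        · rw [hmt]; simp
        · apply Finset.sum_congr rfl
          intro i hi
          have hij : i ≠ j := (Finset.mem_erase.mp hi).1
          simp only [hmt]
          simp [Finset.mem_insert, hij]
      have hgf : ∀ s, g (flip s) = g s := by
        intro s; funext u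
        apply Finset.sum_congr rfl
        intro i hi
        have hij : i ≠ j := (Finset.mem_erase.mp hi).1
        rw [hflip]
        simp [Function.update_of_ne hij]
      have hflipj : ∀ s, (flip s) j = !(s j) := by
        intro s; rw [hflip]; simp
      -- key pairwise inequality
      have key : ∀ s,
          sSup ((fun u => ∑ i, sg (s i) * mt J i u) '' U)
            + sSup ((fun u => ∑ i, sg (flip s i) * mt J i u) '' U)
          ≤ sSup ((fun u => ∑ i, sg (s i) * mt (insert j J) i u) '' U)
            + sSup ((fun u => ∑ i, sg (flip s i) * mt (insert j J) i u) '' U) := by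
        intro s
        have e1 : (fun u => ∑ i, sg (s i) * mt J i u)
            = fun u => sg (s j) * |x j u| + g s u := funext fun u => hdecJ s u
        have e2 : (fun u => ∑ i, sg (flip s i) * mt J i u)
            = fun u => sg (!(s j)) * |x j u| + g s u := by
          funext u; rw [hdecJ (flip s) u, hgf, hflipj]
        have e3 : (fun u => ∑ i, sg (s i) * mt (insert j J) i u)
            = fun u => sg (s j) * x j u + g s u := funext fun u => hdecJ' s u
        have e4 : (fun u => ∑ i, sg (flip s i) * mt (insert j J) i u)
            = fun u => sg (!(s j)) * x j u + g s u := by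
          funext u; rw [hdecJ' (flip s) u, hgf, hflipj]
        rw [e1, e2, e3, e4]
        have hb1 : BddAbove ((fun u => x j u + g s u) '' U) :=
          bdd_of_le (fun u hu => add_le_add (hxb u hu) ((le_abs_self _).trans (hgbound s u hu)))
        have hb2 : BddAbove ((fun u => -x j u + g s u) '' U) :=
          bdd_of_le (fun u hu => add_le_add (hxb' u hu) ((le_abs_self _).trans (hgbound s u hu)))
        have hpair := pair_csSup hU (x j) (g s) hb1 hb2
        cases hsj : s j with
        | true =>
          simp only [hsj, Bool.not_true, sg, if_true, Bool.false_eq_true, if_false,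
            one_mul, neg_one_mul]
          exact hpair
        | false =>
          simp only [hsj, Bool.not_false, sg, if_true, Bool.false_eq_true, if_false,
            one_mul, neg_one_mul]
          rw [add_comm, add_comm (sSup ((fun u => -x j u + g s u) '' U))]
          exact hpair
      -- sum it up
      have hsumflip : ∀ (F : (Fin k → Bool) → ℝ), ∑ s, F (flip s) = ∑ s, F s := by
        intro F
        exact Function.Bijective.sum_comp hbij F
      have h2 : 2 * Φ J ≤ 2 * Φ (insert j J) := by
        have lhs : 2 * Φ J = ∑ s, (sSup ((fun u => ∑ i, sg (s i) * mt J i u) '' U)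
            + sSup ((fun u => ∑ i, sg (flip s i) * mt J i u) '' U)) := by
          rw [Finset.sum_add_distrib, hsumflip (fun s => sSup ((fun u => ∑ i, sg (s i) * mt J i u) '' U))]
          ring
        have rhs : 2 * Φ (insert j J) = ∑ s, (sSup ((fun u => ∑ i, sg (s i) * mt (insert j J) i u) '' U)
            + sSup ((fun u => ∑ i, sg (flip s i) * mt (insert j J) i u) '' U)) := by
          rw [Finset.sum_add_distrib, hsumflip (fun s => sSup ((fun u => ∑ i, sg (s i) * mt (insert j J) i u) '' U))]
          ring
        rw [lhs, rhs]
        exact Finset.sum_le_sum (fun s _ => key s)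
      linarith
  have h0 : (∑ s : Fin k → Bool, sSup ((fun u => ∑ i, sg (s i) * |x i u|) '' U)) = Φ ∅ := by
    simp [hΦ, hmt]
  have h1 : Φ Finset.univ = ∑ s : Fin k → Bool, sSup ((fun u => ∑ i, sg (s i) * x i u) '' U) := by
    simp [hΦ, hmt]
  rw [h0, ← h1]
  exact main Finset.univ

lemma mixture_prob {ε : ℝ} (hε0 : 0 ≤ ε) (hε1 : ε ≤ 1) (Q : Measure ℝ) [IsProbabilityMeasure Q] :
    IsProbabilityMeasure (mixture ε Q) := by
  constructor
  rw [mixture]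
  simp only [Measure.add_apply, Measure.smul_apply, measure_univ, smul_eq_mul, mul_one]
  rw [← ENNReal.ofReal_add (by linarith) hε0]
  norm_num

lemma measurable_nez : Measurable (fun t : ℝ => decide (t ≠ 0)) := by
  apply measurable_to_countable'
  intro b
  cases b
  · have h : (fun t : ℝ => decide (t ≠ 0)) ⁻¹' {false} = {0} := by
      ext t; simp
    rw [h]; exact measurableSet_singleton 0
  · have h : (fun t : ℝ => decide (t ≠ 0)) ⁻¹' {true} = {(0:ℝ)}ᶜ := by
      ext t; simp
    rw [h]; exact (measurableSet_singleton 0).compl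

lemma cube_singleton_meas {k : ℕ} (w : Fin k → Bool) :
    MeasurableSet ({w} : Set (Fin k → Bool)) := by
  rw [← Set.univ_pi_singleton]
  exact MeasurableSet.univ_pi (fun i => trivial)

lemma cube_meas {k : ℕ} (s : Set (Fin k → Bool)) : MeasurableSet s := by
  rw [← Set.biUnion_of_singleton s]
  exact MeasurableSet.biUnion (Set.to_countable s) (fun w _ => cube_singleton_meas w)

open scoped Classical in
lemma measure_cube_set {k : ℕ} (ν : Measure (Fin k → Bool)) (s : Set (Fin k → Bool)) :
    ν s = ∑ w ∈ Finset.univ.filter (fun w => w ∈ s), ν {w} := by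
  classical
  rw [← measure_biUnion_finset ?_ (fun w _ => cube_singleton_meas w)]
  · congr 1
    ext w; simp
  · intro a ha b hb hab
    simp only [Set.disjoint_singleton_left, Set.mem_singleton_iff]
    exact hab

end Stmt10

/-!
STATEMENT 10 (robust ℓ₁ regression with bias): under the design conditions
(C1)–(C3), for observations `η = b + A v* + z` with mixture contamination noise,
if `(λ̄ √((D/k) log(ek/D)) + ε σ √(D/k)) / (λ̲ (1−ε)) ≤ c(δ)` and
`8 ((1/k)Σ|b_i|)/(λ̲(1−ε)) < 1`, then with probability at least `1 − δ` every
minimizer `v̂` of `v ↦ ‖η − A v‖₁` satisfies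
`‖v̂ − v*‖₂ ≤ 4 ((1/k)Σ|b_i|)/(λ̲(1−ε))`.
-/

set_option maxHeartbeats 1000000 in
open Stmt10 in
theorem statement_10 (δ : ℝ) (hδ : δ ∈ Set.Ioo (0 : ℝ) 1) :
    ∃ c : ℝ, 0 < c ∧
      ∀ (ε : ℝ), 0 ≤ ε → ε < 1 →
      ∀ (σ lam lambar : ℝ), 0 < σ → 0 < lam → 0 < lambar →
      ∀ (D k : ℕ), 1 ≤ D → D ≤ k →
      ∀ (A : Fin k → Fin D → ℝ) (b : Fin k → ℝ),
        -- (C1)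
        (∀ cvec : Fin k → ℝ, (∀ i, |cvec i| ≤ 1) →
          l2norm (fun j => (1 / (k : ℝ)) * ∑ i : Fin k, cvec i * A i j) ^ 2
            ≤ σ ^ 2 * D / k) →
        -- (C2)
        (∀ Δ : Fin D → ℝ, l2norm Δ = 1 →
          lam ≤ (1 / (k : ℝ)) * ∑ i : Fin k, |dot (A i) Δ|) →
        -- (C3)
        (∀ Δ : Fin D → ℝ, l2norm Δ = 1 →
          (1 / (k : ℝ)) * ∑ i : Fin k, |dot (A i) Δ| ^ 2 ≤ lambar ^ 2) →
      ∀ (Q : Fin k → Measure ℝ), (∀ i, IsProbabilityMeasure (Q i)) →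
      ∀ (vstar : Fin D → ℝ),
        (lambar * Real.sqrt ((D / (k : ℝ)) * Real.log (Real.exp 1 * k / D))
            + ε * σ * Real.sqrt (D / (k : ℝ))) / (lam * (1 - ε)) ≤ c →
        8 * ((1 / (k : ℝ)) * ∑ i : Fin k, |b i|) / (lam * (1 - ε)) < 1 →
        ENNReal.ofReal (1 - δ) ≤
          (Measure.pi fun i : Fin k => mixture ε (Q i))
            {z : Fin k → ℝ | ∀ vhat : Fin D → ℝ,
              (∀ v : Fin D → ℝ,
                (∑ i : Fin k, |b i + dot (A i) vstar + z i - dot (A i) vhat|) ≤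
                  ∑ i : Fin k, |b i + dot (A i) vstar + z i - dot (A i) v|) →
              l2norm (fun j => vhat j - vstar j) ≤
                4 * ((1 / (k : ℝ)) * ∑ i : Fin k, |b i|) / (lam * (1 - ε))} := by
  classical
  obtain ⟨hδ0, hδ1⟩ := hδ
  refine ⟨δ/12, by positivity, ?_⟩
  intro ε hε0 hε1 σ lam lambar hσ hlam hlambar D k hD hDk A b hC1 hC2 hC3 Q hQ vstar hyp _hb8
  set c : ℝ := δ/12 with hc
  have hk0 : 0 < k := lt_of_lt_of_le hD hDk
  have hkR : (0:ℝ) < (k:ℝ) := by exact_mod_cast hk0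
  have hDR : (0:ℝ) < (D:ℝ) := by exact_mod_cast hD
  have hDkR : (0:ℝ) < (D:ℝ)/(k:ℝ) := div_pos hDR hkR
  set U : Set (Fin D → ℝ) := {u | l2norm u = 1} with hUdef
  set e : Fin D → Fin D → ℝ := fun j0 j => if j = j0 then 1 else 0 with he
  have hel2 : ∀ j0, l2norm (e j0) = 1 := by
    intro j0; rw [l2norm]
    have h : ∑ j, (e j0 j)^2 = 1 := by
      simp only [he]
      rw [Finset.sum_eq_single j0]
      · simp
      · intro j _ hne; simp [hne]
      · intro h; exact absurd (Finset.mem_univ j0) h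
    rw [h, Real.sqrt_one]
  have heU : ∀ j0, e j0 ∈ U := fun j0 => hel2 j0
  have hUne : U.Nonempty := ⟨e ⟨0, hD⟩, heU _⟩
  have hedot : ∀ i j0, dot (A i) (e j0) = A i j0 := by
    intro i j0; rw [dot]
    rw [Finset.sum_eq_single j0]
    · simp [he]
    · intro j _ hne; simp [he, hne]
    · intro h; exact absurd (Finset.mem_univ j0) h
  set rn : Fin k → ℝ := fun i => Real.sqrt (∑ j, A i j ^ 2) with hrn
  have hrn0 : ∀ i, 0 ≤ rn i := fun i => Real.sqrt_nonneg _
  have hrnsq : ∀ i, rn i ^ 2 = ∑ j, A i j ^ 2 := fun i => Real.sq_sqrt (by positivity)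
  have hrow : ∀ i, ∀ u ∈ U, |dot (A i) u| ≤ rn i := by
    intro i u hu
    have hu1 : l2norm u = 1 := hu
    calc |dot (A i) u| ≤ l2norm (A i) * l2norm u := dot_le _ _
      _ = rn i := by rw [hu1, mul_one]; rfl
  set sqrtDk : ℝ := Real.sqrt ((D:ℝ)/(k:ℝ)) with hsqrtDk
  have hsqrtDk_pos : 0 < sqrtDk := Real.sqrt_pos.2 hDkR
  set valA : (Fin k → ℝ) → (Fin D → ℝ) → ℝ :=
    fun d u => (1/(k:ℝ)) * ∑ i, d i * |dot (A i) u| with hvalA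
  set SupA : (Fin k → ℝ) → ℝ := fun d => sSup (valA d '' U) with hSupA
  -- C1 consequence
  have hC1' : ∀ d : Fin k → ℝ, (∀ i, |d i| ≤ 1) → ∀ u ∈ U, valA d u ≤ σ * sqrtDk := by
    intro d hd u hu
    have hu1 : l2norm u = 1 := hu
    set sgn : Fin k → ℝ := fun i => if dot (A i) u < 0 then -1 else 1 with hsgn
    set cc : Fin k → ℝ := fun i => d i * sgn i with hcc
    have hcc1 : ∀ i, |cc i| ≤ 1 := by
      intro i
      rw [hcc]
      simp only []
      rw [abs_mul]
      have : |sgn i| = 1 := by rw [hsgn]; simp only []; split <;> simp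
      rw [this, mul_one]; exact hd i
    have hkey : ∀ i, cc i * dot (A i) u = d i * |dot (A i) u| := by
      intro i
      rcases lt_or_ge (dot (A i) u) 0 with h|h
      · rw [abs_of_neg h, hcc]; simp only [hsgn, if_pos h]; ring
      · rw [abs_of_nonneg h, hcc]; simp only [hsgn, if_neg (not_lt.2 h)]; ring
    set v : Fin D → ℝ := fun j => (1/(k:ℝ)) * ∑ i, cc i * A i j with hv
    have hswap : valA d u = dot v u := by
      rw [hvalA, dot]
      simp only [hv]
      calc (1/(k:ℝ)) * ∑ i, d i * |dot (A i) u|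
          = (1/(k:ℝ)) * ∑ i, cc i * dot (A i) u := by
            congr 1; exact Finset.sum_congr rfl (fun i _ => (hkey i).symm)
        _ = (1/(k:ℝ)) * ∑ i, ∑ j, cc i * A i j * u j := by
            congr 1; apply Finset.sum_congr rfl; intro i _
            rw [dot, Finset.mul_sum]; apply Finset.sum_congr rfl; intro j _; ring
        _ = (1/(k:ℝ)) * ∑ j, ∑ i, cc i * A i j * u j := by rw [Finset.sum_comm]
        _ = ∑ j, ((1/(k:ℝ)) * ∑ i, cc i * A i j) * u j := by
            rw [Finset.mul_sum]; apply Finset.sum_congr rfl; intro j _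
            rw [mul_assoc, Finset.sum_mul]
    have hvb : l2norm v ≤ σ * sqrtDk := by
      have h2 := hC1 cc hcc1
      apply le_of_sq_le_sq (by positivity)
      calc l2norm v ^2 ≤ σ^2 * D / k := h2
        _ = (σ*sqrtDk)^2 := by
            rw [mul_pow, hsqrtDk, Real.sq_sqrt hDkR.le, mul_div_assoc]
    calc valA d u = dot v u := hswap
      _ ≤ |dot v u| := le_abs_self _
      _ ≤ l2norm v * l2norm u := dot_le v u
      _ = l2norm v := by rw [hu1, mul_one]
      _ ≤ σ * sqrtDk := hvb
  have hC1eps : ∀ d : Fin k → ℝ, (∀ i, 0 ≤ d i) → (∀ i, d i ≤ ε) → ∀ u ∈ U,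
      valA d u ≤ ε * (σ * sqrtDk) := by
    intro d h0 h1 u hu
    rcases eq_or_lt_of_le hε0 with heq | hεpos
    · have hz : ∀ i, d i = 0 := fun i => le_antisymm (heq ▸ h1 i) (h0 i)
      have : valA d u = 0 := by
        rw [hvalA]; simp only []
        rw [Finset.sum_eq_zero (fun i _ => by rw [hz i, zero_mul]), mul_zero]
      rw [this, ← heq, zero_mul]
    · have hval : valA d u = ε * valA (fun i => d i / ε) u := by
        rw [hvalA]; simp only []
        rw [Finset.mul_sum, Finset.mul_sum, Finset.mul_sum]
        apply Finset.sum_congr rfl; intro i _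
        field_simp
      rw [hval]
      apply mul_le_mul_of_nonneg_left _ hε0
      apply hC1' _ _ u hu
      intro i
      rw [abs_of_nonneg (div_nonneg (h0 i) hε0)]
      rw [div_le_one hεpos]
      exact h1 i
  -- sSup helpers
  have hvalbound : ∀ d, ∀ u ∈ U, valA d u ≤ (1/(k:ℝ)) * ∑ i, |d i| * rn i := by
    intro d u hu
    apply mul_le_mul_of_nonneg_left _ (by positivity)
    apply Finset.sum_le_sum
    intro i _
    calc d i * |dot (A i) u| ≤ |d i| * |dot (A i) u| := by
          apply mul_le_mul_of_nonneg_right (le_abs_self _) (abs_nonneg _)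
      _ ≤ |d i| * rn i := by
          apply mul_le_mul_of_nonneg_left (hrow i u hu) (abs_nonneg _)
  have hbddA : ∀ d, BddAbove (valA d '' U) := fun d => bdd_of_le (hvalbound d)
  have hSupA_le : ∀ d y, (∀ u ∈ U, valA d u ≤ y) → SupA d ≤ y := by
    intro d y h
    apply csSup_le (hUne.image _)
    rintro z ⟨u, hu, rfl⟩; exact h u hu
  have hle_SupA : ∀ d, ∀ u ∈ U, valA d u ≤ SupA d := fun d u hu => le_csSup (hbddA d) ⟨u, hu, rfl⟩
  have hSupA_add : ∀ d d', SupA (fun i => d i + d' i) ≤ SupA d + SupA d' := by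
    intro d d'
    apply hSupA_le
    intro u hu
    have hsplit : valA (fun i => d i + d' i) u = valA d u + valA d' u := by
      rw [hvalA]; simp only []
      rw [← mul_add, ← Finset.sum_add_distrib]
      congr 1; apply Finset.sum_congr rfl; intro i _; ring
    rw [hsplit]
    exact add_le_add (hle_SupA d u hu) (hle_SupA d' u hu)
  -- constants
  have hL1 : (1:ℝ) ≤ Real.log (Real.exp 1 * k / D) := by
    have h1 : Real.exp 1 ≤ Real.exp 1 * k / D := by
      rw [mul_div_assoc]
      nth_rewrite 1 [← mul_one (Real.exp 1)]
      apply mul_le_mul_of_nonneg_left _ (Real.exp_pos 1).le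
      rw [le_div_iff₀ hDR, one_mul]
      exact_mod_cast hDk
    calc (1:ℝ) = Real.log (Real.exp 1) := (Real.log_exp 1).symm
      _ ≤ _ := Real.log_le_log (Real.exp_pos _) h1
  have h1ε : 0 < 1 - ε := by linarith
  have hdenpos : 0 < lam * (1-ε) := mul_pos hlam h1ε
  have hnum : lambar * Real.sqrt (((D:ℝ)/(k:ℝ)) * Real.log (Real.exp 1 * k / D))
      + ε*σ*sqrtDk ≤ c * (lam*(1-ε)) := by
    rw [hsqrtDk]
    have := (div_le_iff₀ hdenpos).1 hyp
    linarith
  have ht1 : 0 ≤ lambar * Real.sqrt (((D:ℝ)/(k:ℝ)) * Real.log (Real.exp 1 * k / D)) := by positivity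
  have ht2 : 0 ≤ ε * σ * sqrtDk := by positivity
  have hbar : lambar * sqrtDk ≤ c * (lam * (1-ε)) := by
    have hmono : sqrtDk ≤ Real.sqrt (((D:ℝ)/(k:ℝ)) * Real.log (Real.exp 1 * k / D)) := by
      rw [hsqrtDk]
      apply Real.sqrt_le_sqrt
      nlinarith [hDkR.le]
    nlinarith [mul_le_mul_of_nonneg_left hmono hlambar.le]
  have hepsterm : ε * (σ * sqrtDk) ≤ c * (lam * (1-ε)) := by rw [← mul_assoc]; linarith
  have hc0 : 0 < c := by rw [hc]; positivity
  have hc1 : c ≤ 1 := by rw [hc]; linarith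
  have hlamle : lam ≤ σ * sqrtDk := by
    have h2 := hC2 (e ⟨0,hD⟩) (hel2 _)
    have h3 := hC1' (fun _ => (1:ℝ)) (by intro i; simp) (e ⟨0,hD⟩) (heU _)
    calc lam ≤ (1/(k:ℝ)) * ∑ i, |dot (A i) (e ⟨0,hD⟩)| := h2
      _ = valA (fun _ => 1) (e ⟨0,hD⟩) := by rw [hvalA]; simp
      _ ≤ σ * sqrtDk := h3
  have hεc : ε ≤ c := by
    have hσs : 0 < σ * sqrtDk := by positivity
    have h4 : ε * (σ*sqrtDk) ≤ c * (σ*sqrtDk) := by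
      calc ε*(σ*sqrtDk) ≤ c*(lam*(1-ε)) := hepsterm
        _ ≤ c*(σ*sqrtDk) := by
            apply mul_le_mul_of_nonneg_left _ hc0.le
            nlinarith [hlamle]
    exact le_of_mul_le_mul_right h4 hσs
  -- measure setup
  haveI hmixP : ∀ i : Fin k, IsProbabilityMeasure (mixture ε (Q i)) := fun i => by
    haveI := hQ i; exact mixture_prob hε0 hε1.le (Q i)
  set μ := Measure.pi fun i : Fin k => mixture ε (Q i) with hμ
  haveI : IsProbabilityMeasure μ := by rw [hμ]; infer_instance
  set f : ℝ → Bool := fun t => decide (t ≠ 0) with hf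
  have hfm : Measurable f := measurable_nez
  set W : (Fin k → ℝ) → (Fin k → Bool) := fun z i => f (z i) with hWdef
  have hWm : Measurable W := measurable_pi_lambda _ (fun i => hfm.comp (measurable_pi_apply i))
  set β : Fin k → Measure Bool := fun i => (mixture ε (Q i)).map f with hβ
  haveI hβP : ∀ i, IsProbabilityMeasure (β i) := fun i => Measure.isProbabilityMeasure_map hfm.aemeasurable
  set ν := μ.map W with hν
  haveI : IsProbabilityMeasure ν := by rw [hν]; exact Measure.isProbabilityMeasure_map hWm.aemeasurable
  have hνpi : Measure.pi β = ν := by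
    apply Measure.pi_eq
    intro s hs
    rw [hν, Measure.map_apply hWm (MeasurableSet.univ_pi hs)]
    have hpre : W ⁻¹' (Set.pi Set.univ s) = Set.pi Set.univ (fun i => f ⁻¹' (s i)) := by
      ext z; simp [hWdef, Set.mem_pi]
    rw [hpre, hμ, Measure.pi_pi]
    exact Finset.prod_congr rfl (fun i _ => (Measure.map_apply hfm (hs i)).symm)
  set m : Fin k → Bool → ℝ := fun i b => (β i {b}).toReal with hm
  set p : Fin k → ℝ := fun i => m i true with hp
  have hm0 : ∀ i b, 0 ≤ m i b := fun i b => ENNReal.toReal_nonneg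
  have hmsum : ∀ i, m i true + m i false = 1 := by
    intro i
    have hu : ({true} : Set Bool) ∪ {false} = Set.univ := by ext b; cases b <;> simp
    have hd : Disjoint ({true} : Set Bool) {false} := by simp
    have h2 : β i ({true} ∪ {false}) = β i {true} + β i {false} := measure_union hd trivial
    rw [hu, measure_univ] at h2
    rw [hm]
    simp only []
    rw [← ENNReal.toReal_add (measure_ne_top _ _) (measure_ne_top _ _), ← h2, ENNReal.toReal_one]
  have hp0 : ∀ i, 0 ≤ p i := fun i => hm0 i true
  have hpε : ∀ i, p i ≤ ε := by
    intro i
    rw [hp, hm]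
    simp only [hβ]
    rw [Measure.map_apply hfm trivial]
    have hpre : f ⁻¹' {true} = {(0:ℝ)}ᶜ := by ext t; simp [hf]
    rw [hpre, mixture]
    simp only [Measure.add_apply, Measure.smul_apply, smul_eq_mul]
    rw [Measure.dirac_apply' _ (measurableSet_singleton (0:ℝ)).compl]
    rw [Set.indicator_of_notMem (by simp)]
    rw [mul_zero, zero_add]
    haveI := hQ i
    calc (ENNReal.ofReal ε * (Q i) {(0:ℝ)}ᶜ).toReal
        ≤ (ENNReal.ofReal ε * 1).toReal := by
          apply ENNReal.toReal_mono
          · rw [mul_one]; exact ENNReal.ofReal_ne_top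
          · exact mul_le_mul_right prob_le_one _
      _ = ε := by rw [mul_one, ENNReal.toReal_ofReal hε0]
  set M : (Fin k → Bool) → ℝ := fun w => ∏ i, m i (w i) with hM
  have hM0 : ∀ w, 0 ≤ M w := fun w => Finset.prod_nonneg (fun i _ => hm0 i _)
  have hνsing : ∀ w : Fin k → Bool, ν {w} = ENNReal.ofReal (M w) := by
    intro w
    rw [← hνpi, ← Set.univ_pi_singleton, Measure.pi_pi, hM]
    have hfin : (∏ i, β i {w i}) ≠ ⊤ :=
      (ENNReal.prod_lt_top (fun i _ => (measure_ne_top _ _).lt_top)).ne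
    conv_lhs => rw [← ENNReal.ofReal_toReal hfin]
    congr 1
    rw [ENNReal.toReal_prod]
  have hsumM : ∑ w : Fin k → Bool, M w = 1 := by
    have h := Finset.prod_univ_sum (fun _ : Fin k => (Finset.univ : Finset Bool)) (fun i b => m i b)
    rw [Fintype.piFinset_univ] at h
    rw [hM, ← h]
    apply Finset.prod_eq_one
    intro i _
    rw [Fintype.sum_bool]
    exact hmsum i
  -- marginal
  have hmarg : ∀ i0 : Fin k, ∑ w : Fin k → Bool, M w * (if w i0 then (1:ℝ) else 0) = p i0 := by
    intro i0
    have h := Finset.prod_univ_sum (fun _ : Fin k => (Finset.univ : Finset Bool))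
        (fun i b => m i b * (if i = i0 then (if b then (1:ℝ) else 0) else 1))
    rw [Fintype.piFinset_univ] at h
    have hL : ∀ w : Fin k → Bool,
        (∏ i, (m i (w i) * (if i = i0 then (if w i then (1:ℝ) else 0) else 1)))
          = M w * (if w i0 then 1 else 0) := by
      intro w
      rw [Finset.prod_mul_distrib, hM]
      congr 1
      rw [Finset.prod_ite_eq' Finset.univ i0 (fun i => (if w i then (1:ℝ) else 0))]
      simp
    have hR : ∀ i : Fin k,
        (∑ b, m i b * (if i = i0 then (if b then (1:ℝ) else 0) else 1))
          = if i = i0 then p i0 else 1 := by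
      intro i
      by_cases hii : i = i0
      · subst hii
        rw [Fintype.sum_bool]
        simp [hp]
      · simp only [hii, if_false, mul_one]
        rw [Fintype.sum_bool]
        exact hmsum i
    calc ∑ w : Fin k → Bool, M w * (if w i0 then (1:ℝ) else 0)
        = ∑ w : Fin k → Bool, ∏ i, (m i (w i) * (if i = i0 then (if w i then (1:ℝ) else 0) else 1)) :=
          Finset.sum_congr rfl (fun w _ => (hL w).symm)
      _ = ∏ i, ∑ b, m i b * (if i = i0 then (if b then (1:ℝ) else 0) else 1) := h.symm
      _ = ∏ i, (if i = i0 then p i0 else 1) := Finset.prod_congr rfl (fun i _ => hR i)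
      _ = p i0 := by
          rw [Finset.prod_ite_eq' Finset.univ i0 (fun _ => p i0)]
          simp
  -- good event and deterministic part
  set χ : (Fin k → Bool) → Fin k → ℝ := fun w i => if w i then 1 else 0 with hχ
  set T : (Fin k → Bool) → ℝ := fun w => SupA (χ w) with hT
  set G : Set (Fin k → Bool) := {w | T w ≤ lam/4} with hG
  set avgb : ℝ := (1/(k:ℝ)) * ∑ i, |b i| with havgb
  have havgb0 : 0 ≤ avgb := by rw [havgb]; positivity
  have hdet : ∀ z : Fin k → ℝ, W z ∈ G → ∀ vhat : Fin D → ℝ,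
      (∀ v : Fin D → ℝ,
        (∑ i : Fin k, |b i + dot (A i) vstar + z i - dot (A i) vhat|) ≤
          ∑ i : Fin k, |b i + dot (A i) vstar + z i - dot (A i) v|) →
      l2norm (fun j => vhat j - vstar j) ≤ 4 * avgb / (lam * (1 - ε)) := by
    intro z hzG vhat hmin
    set Δ : Fin D → ℝ := fun j => vhat j - vstar j with hΔ
    set r : ℝ := l2norm Δ with hr
    have hr0le : (0:ℝ) ≤ r := by rw [hr, l2norm]; positivity
    rcases eq_or_lt_of_le hr0le with hr0 | hrpos
    · rw [← hr0]; positivity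
    set u : Fin D → ℝ := fun j => Δ j / r with hu
    have hΔu : ∀ j, Δ j = r * u j := by
      intro j; rw [hu]; field_simp
    have huU : u ∈ U := by
      show l2norm u = 1
      rw [l2norm, hu]
      simp only []
      have hsq : ∀ j : Fin D, (Δ j / r)^2 = (Δ j ^2) / r^2 := fun j => div_pow _ _ _
      rw [Finset.sum_congr rfl (fun j _ => hsq j), ← Finset.sum_div]
      rw [Real.sqrt_div (by positivity), Real.sqrt_sq hr0le]
      rw [show Real.sqrt (∑ j, Δ j ^ 2) = r from rfl]
      exact div_self hrpos.ne'
    have hdotΔ : ∀ i, dot (A i) Δ = r * dot (A i) u := by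
      intro i; rw [dot, dot, Finset.mul_sum]
      apply Finset.sum_congr rfl; intro j _
      rw [hΔu j]; ring
    have hvhat : ∀ i, dot (A i) vhat = dot (A i) vstar + dot (A i) Δ := by
      intro i; rw [dot, dot, dot, ← Finset.sum_add_distrib]
      apply Finset.sum_congr rfl; intro j _
      rw [hΔ]; simp only []; ring
    have hLHS : ∀ i, b i + dot (A i) vstar + z i - dot (A i) vhat = (b i + z i) - dot (A i) Δ := by
      intro i; rw [hvhat i]; ring
    have hmin2 : (∑ i, |(b i + z i) - dot (A i) Δ|) ≤ ∑ i, |b i + z i| := by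
      calc (∑ i, |(b i + z i) - dot (A i) Δ|)
          = ∑ i, |b i + dot (A i) vstar + z i - dot (A i) vhat| := by
            apply Finset.sum_congr rfl; intro i _; rw [hLHS i]
        _ ≤ ∑ i, |b i + dot (A i) vstar + z i - dot (A i) vstar| := hmin vstar
        _ = ∑ i, |b i + z i| := by
            apply Finset.sum_congr rfl; intro i _
            congr 1; ring
    set w : Fin k → Bool := W z with hwz
    have hwzero : ∀ i, w i = false → z i = 0 := by
      intro i hwi
      have h2 : f (z i) = false := hwi
      rw [hf] at h2
      simpa using h2
    have hLi : ∀ i, (if w i then |b i + z i| - |dot (A i) Δ| else |dot (A i) Δ| - |b i|)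
        ≤ |(b i + z i) - dot (A i) Δ| := by
      intro i
      cases hwi : w i with
      | true =>
        rw [if_pos rfl]
        exact abs_sub_abs_le_abs_sub _ _
      | false =>
        rw [if_neg (by simp)]
        rw [hwzero i hwi, add_zero]
        calc |dot (A i) Δ| - |b i| ≤ |dot (A i) Δ - b i| := abs_sub_abs_le_abs_sub _ _
          _ = |b i - dot (A i) Δ| := abs_sub_comm _ _
    have hRi : ∀ i, |b i + z i| = (if w i then |b i + z i| else |b i|) := by
      intro i
      cases hwi : w i with
      | true => rw [if_pos rfl]
      | false => rw [if_neg (by simp), hwzero i hwi, add_zero]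
    have hsum1 : (∑ i, (if w i then |b i + z i| - |dot (A i) Δ| else |dot (A i) Δ| - |b i|))
        ≤ ∑ i, (if w i then |b i + z i| else |b i|) := by
      refine le_trans (Finset.sum_le_sum (fun i _ => hLi i)) (le_trans hmin2 ?_)
      exact le_of_eq (Finset.sum_congr rfl (fun i _ => hRi i))
    have hkey : ∑ i, |dot (A i) Δ|
        ≤ 2 * ∑ i, (χ w i) * |dot (A i) Δ| + 2 * ∑ i, |b i| := by
      have hterm : ∀ i : Fin k,
          (if w i then |b i + z i| else |b i|)
            - (if w i then |b i + z i| - |dot (A i) Δ| else |dot (A i) Δ| - |b i|)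
          ≤ 2*((χ w i)*|dot (A i) Δ|) + 2*|b i| - |dot (A i) Δ| := by
        intro i
        cases hwi : w i with
        | true =>
          rw [if_pos rfl, if_pos rfl, hχ]
          simp only [hwi, if_true]
          have := abs_nonneg (b i)
          linarith
        | false =>
          rw [if_neg (by simp), if_neg (by simp), hχ]
          simp only [hwi, Bool.false_eq_true, if_false]
          have := abs_nonneg (dot (A i) Δ)
          have := abs_nonneg (b i)
          linarith
      have h4 := Finset.sum_le_sum (fun i (_ : i ∈ Finset.univ) => hterm i)
      rw [Finset.sum_sub_distrib] at h4
      have h5 : (∑ i, (2*((χ w i)*|dot (A i) Δ|) + 2*|b i| - |dot (A i) Δ|))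
          = 2*(∑ i, (χ w i)*|dot (A i) Δ|) + 2*(∑ i, |b i|) - ∑ i, |dot (A i) Δ| := by
        rw [Finset.sum_sub_distrib, Finset.sum_add_distrib, Finset.mul_sum, Finset.mul_sum]
      rw [h5] at h4
      linarith
    have hYr : ∀ i, |dot (A i) Δ| = r * |dot (A i) u| := by
      intro i; rw [hdotΔ i, abs_mul, abs_of_pos hrpos]
    have hlow : lam * r ≤ (1/(k:ℝ)) * ∑ i, |dot (A i) Δ| := by
      calc lam * r ≤ ((1/(k:ℝ)) * ∑ i, |dot (A i) u|) * r :=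
            mul_le_mul_of_nonneg_right (hC2 u huU) hr0le
        _ = (1/(k:ℝ)) * ∑ i, |dot (A i) Δ| := by
            have h6 : ∑ i, |dot (A i) Δ| = ∑ i, r * |dot (A i) u| :=
              Finset.sum_congr rfl (fun i _ => hYr i)
            rw [h6, ← Finset.mul_sum]
            ring
    have hupp : (1/(k:ℝ)) * ∑ i, (χ w i) * |dot (A i) Δ| ≤ r * (lam/4) := by
      have hTw : T w ≤ lam/4 := hzG
      have hval := hle_SupA (χ w) u huU
      have hval2 : valA (χ w) u ≤ lam/4 := le_trans hval hTw
      have heq : (1/(k:ℝ)) * ∑ i, (χ w i) * |dot (A i) Δ| = r * valA (χ w) u := by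
        rw [hvalA]
        simp only []
        have h6 : ∑ i, (χ w i) * |dot (A i) Δ| = ∑ i, r * (χ w i * |dot (A i) u|) :=
          Finset.sum_congr rfl (fun i _ => by rw [hYr i]; ring)
        rw [h6, ← Finset.mul_sum]
        ring
      rw [heq]
      exact mul_le_mul_of_nonneg_left hval2 hr0le
    have hdiv := mul_le_mul_of_nonneg_left hkey (by positivity : (0:ℝ) ≤ 1/(k:ℝ))
    have hexp : (1/(k:ℝ)) * (2 * ∑ i, (χ w i) * |dot (A i) Δ| + 2 * ∑ i, |b i|)
        = 2 * ((1/(k:ℝ)) * ∑ i, (χ w i) * |dot (A i) Δ|) + 2 * avgb := by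
      rw [havgb]; ring
    rw [hexp] at hdiv
    have hr4 : r ≤ 4 * avgb / lam := by
      rw [le_div_iff₀ hlam]
      nlinarith
    calc r ≤ 4*avgb/lam := hr4
      _ ≤ 4*avgb/(lam*(1-ε)) := by
          apply div_le_div_of_nonneg_left (by positivity) hdenpos
          nlinarith
  -- expectation chain
  have hχ0 : ∀ w i, (0:ℝ) ≤ χ w i := by
    intro w i; rw [hχ]; simp only []; split <;> norm_num
  have hχ1 : ∀ w i, χ w i ≤ 1 := by
    intro w i; rw [hχ]; simp only []; split <;> norm_num
  have hmargχ : ∀ i0 : Fin k, ∑ w : Fin k → Bool, M w * χ w i0 = p i0 := by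
    intro i0
    rw [← hmarg i0]
  have hT0 : ∀ w, 0 ≤ T w := by
    intro w
    have h0 : (0:ℝ) ≤ valA (χ w) (e ⟨0,hD⟩) := by
      rw [hvalA]; simp only []
      apply mul_nonneg (by positivity)
      apply Finset.sum_nonneg; intro i _
      exact mul_nonneg (hχ0 w i) (abs_nonneg _)
    exact le_trans h0 (hle_SupA _ _ (heU _))
  set F : (Fin k → Bool) → ℝ := fun w => SupA (fun i => χ w i - p i) with hF
  have hTF : ∀ w, T w ≤ ε*(σ*sqrtDk) + F w := by
    intro w
    apply hSupA_le; intro u hu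
    have hsplit : valA (χ w) u = valA p u + valA (fun i => χ w i - p i) u := by
      rw [hvalA]; simp only []
      rw [← mul_add, ← Finset.sum_add_distrib]
      congr 1; apply Finset.sum_congr rfl; intro i _; ring
    rw [hsplit]
    exact add_le_add (hC1eps p hp0 hpε u hu) (hle_SupA _ u hu)
  set F2 : (Fin k → Bool) → (Fin k → Bool) → ℝ := fun w w' => SupA (fun i => χ w i - χ w' i) with hF2
  have hstep1 : ∀ w, F w ≤ ∑ w' : Fin k → Bool, M w' * F2 w w' := by
    intro w
    apply hSupA_le; intro u hu
    have hper : ∀ i : Fin k, (χ w i - p i) * ((1/(k:ℝ)) * |dot (A i) u|)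
        = ∑ w' : Fin k → Bool, M w' * ((χ w i - χ w' i) * ((1/(k:ℝ)) * |dot (A i) u|)) := by
      intro i
      set C : ℝ := (1/(k:ℝ)) * |dot (A i) u| with hC
      have h7 : ∀ w' : Fin k → Bool, M w' * ((χ w i - χ w' i) * C)
          = (M w' * (χ w i * C)) - (M w' * χ w' i) * C := by intro w'; ring
      rw [Finset.sum_congr rfl (fun w' _ => h7 w'), Finset.sum_sub_distrib]
      rw [← Finset.sum_mul, ← Finset.sum_mul, hsumM, hmargχ i]
      ring
    have hexp : valA (fun i => χ w i - p i) u
        = ∑ w' : Fin k → Bool, M w' * valA (fun i => χ w i - χ w' i) u := by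
      calc valA (fun i => χ w i - p i) u
          = ∑ i, (χ w i - p i) * ((1/(k:ℝ)) * |dot (A i) u|) := by
            rw [hvalA]; simp only []; rw [Finset.mul_sum]
            apply Finset.sum_congr rfl; intro i _; ring
        _ = ∑ i, ∑ w' : Fin k → Bool, M w' * ((χ w i - χ w' i) * ((1/(k:ℝ)) * |dot (A i) u|)) :=
            Finset.sum_congr rfl (fun i _ => hper i)
        _ = ∑ w' : Fin k → Bool, ∑ i, M w' * ((χ w i - χ w' i) * ((1/(k:ℝ)) * |dot (A i) u|)) :=
            Finset.sum_comm
        _ = ∑ w' : Fin k → Bool, M w' * valA (fun i => χ w i - χ w' i) u := by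
            apply Finset.sum_congr rfl; intro w' _
            rw [hvalA]; simp only []
            rw [Finset.mul_sum, Finset.mul_sum]
            apply Finset.sum_congr rfl; intro i _; ring
    rw [hexp]
    apply Finset.sum_le_sum; intro w' _
    exact mul_le_mul_of_nonneg_left (hle_SupA _ u hu) (hM0 w')
  have hEF2 : ∑ w : Fin k → Bool, M w * F w
      ≤ ∑ w : Fin k → Bool, ∑ w' : Fin k → Bool, (M w * M w') * F2 w w' := by
    apply Finset.sum_le_sum; intro w _
    calc M w * F w ≤ M w * ∑ w' : Fin k → Bool, M w' * F2 w w' :=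
          mul_le_mul_of_nonneg_left (hstep1 w) (hM0 w)
      _ = ∑ w' : Fin k → Bool, (M w * M w') * F2 w w' := by
          rw [Finset.mul_sum]; apply Finset.sum_congr rfl; intro w' _; ring
  -- symmetrization
  have hsym : ∀ s : Fin k → Bool,
      (∑ w : Fin k → Bool, ∑ w' : Fin k → Bool, (M w * M w') * F2 w w')
        = ∑ w : Fin k → Bool, ∑ w' : Fin k → Bool,
            (M w * M w') * SupA (fun i => sg (s i) * (χ w i - χ w' i)) := by
    intro s
    have hL : (∑ w : Fin k → Bool, ∑ w' : Fin k → Bool, (M w * M w') * F2 w w')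
        = ∑ q : (Fin k → Bool) × (Fin k → Bool), (M q.1 * M q.2) * F2 q.1 q.2 :=
      (Fintype.sum_prod_type (fun q : (Fin k → Bool) × (Fin k → Bool) => (M q.1 * M q.2) * F2 q.1 q.2)).symm
    have hR : (∑ w : Fin k → Bool, ∑ w' : Fin k → Bool,
            (M w * M w') * SupA (fun i => sg (s i) * (χ w i - χ w' i)))
        = ∑ q : (Fin k → Bool) × (Fin k → Bool),
            (M q.1 * M q.2) * SupA (fun i => sg (s i) * (χ q.1 i - χ q.2 i)) :=
      (Fintype.sum_prod_type (fun q : (Fin k → Bool) × (Fin k → Bool) =>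
        (M q.1 * M q.2) * SupA (fun i => sg (s i) * (χ q.1 i - χ q.2 i)))).symm
    rw [hL, hR]
    set φ : (Fin k → Bool) × (Fin k → Bool) → (Fin k → Bool) × (Fin k → Bool) :=
      fun q => (fun i => if s i then q.1 i else q.2 i, fun i => if s i then q.2 i else q.1 i) with hφ
    have hφinv : Function.Involutive φ := by
      intro q
      simp only [hφ]
      ext i <;> by_cases hsi : s i <;> simp [hsi]
    have hMφ : ∀ q, M (φ q).1 * M (φ q).2 = M q.1 * M q.2 := by
      intro q
      simp only [hM, hφ]
      rw [← Finset.prod_mul_distrib, ← Finset.prod_mul_distrib]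
      apply Finset.prod_congr rfl; intro i _
      by_cases hsi : s i
      · simp [hsi]
      · simp [hsi, mul_comm]
    have hFφ : ∀ q, F2 (φ q).1 (φ q).2 = SupA (fun i => sg (s i) * (χ q.1 i - χ q.2 i)) := by
      intro q
      simp only [hF2, hφ]
      congr 1
      funext i
      by_cases hsi : s i
      · simp [hχ, hsi, sg]
      · simp only [hχ, hsi, sg, Bool.false_eq_true, if_false]
        ring
    calc ∑ q : (Fin k → Bool) × (Fin k → Bool), (M q.1 * M q.2) * F2 q.1 q.2
        = ∑ q : (Fin k → Bool) × (Fin k → Bool), (M (φ q).1 * M (φ q).2) * F2 (φ q).1 (φ q).2 :=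
          (Function.Bijective.sum_comp hφinv.bijective _).symm
      _ = ∑ q : (Fin k → Bool) × (Fin k → Bool),
            (M q.1 * M q.2) * SupA (fun i => sg (s i) * (χ q.1 i - χ q.2 i)) := by
          apply Finset.sum_congr rfl; intro q _
          rw [hMφ q, hFφ q]
  set H : (Fin k → Bool) → ℝ := fun w => ∑ s : Fin k → Bool, SupA (fun i => sg (s i) * χ w i) with hH
  have hsub : ∀ q1 q2 : Fin k → Bool,
      (∑ s : Fin k → Bool, SupA (fun i => sg (s i) * (χ q1 i - χ q2 i))) ≤ H q1 + H q2 := by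
    intro q1 q2
    have h8 : ∀ s : Fin k → Bool, SupA (fun i => sg (s i) * (χ q1 i - χ q2 i))
        ≤ SupA (fun i => sg (s i) * χ q1 i) + SupA (fun i => -(sg (s i)) * χ q2 i) := by
      intro s
      have h9 : (fun i => sg (s i) * (χ q1 i - χ q2 i))
          = fun i => (sg (s i) * χ q1 i) + (-(sg (s i)) * χ q2 i) := by funext i; ring
      rw [h9]; exact hSupA_add _ _
    have h10 : ∑ s : Fin k → Bool, SupA (fun i => -(sg (s i)) * χ q2 i)
        = ∑ s : Fin k → Bool, SupA (fun i => sg (s i) * χ q2 i) := by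
      have hbij : Function.Bijective (fun s : Fin k → Bool => fun i => !(s i)) :=
        Function.Involutive.bijective (fun s => by funext i; simp)
      have h11 := Function.Bijective.sum_comp hbij (fun s => SupA (fun i => sg (s i) * χ q2 i))
      rw [← h11]
      apply Finset.sum_congr rfl; intro s _
      exact congrArg SupA (funext fun i => by rw [sg_not])
    calc (∑ s : Fin k → Bool, SupA (fun i => sg (s i) * (χ q1 i - χ q2 i)))
        ≤ ∑ s : Fin k → Bool,
            (SupA (fun i => sg (s i) * χ q1 i) + SupA (fun i => -(sg (s i)) * χ q2 i)) :=
          Finset.sum_le_sum (fun s _ => h8 s)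
      _ = (∑ s : Fin k → Bool, SupA (fun i => sg (s i) * χ q1 i))
            + ∑ s : Fin k → Bool, SupA (fun i => -(sg (s i)) * χ q2 i) := Finset.sum_add_distrib
      _ = H q1 + H q2 := by rw [h10]
  -- cardinality
  have hcard : ((Finset.univ : Finset (Fin k → Bool)).card : ℝ) = (2:ℝ)^k := by
    rw [Finset.card_univ, Fintype.card_fun, Fintype.card_bool, Fintype.card_fin]
    push_cast; ring
  have hpow : (0:ℝ) < (2:ℝ)^k := by positivity
  -- orthogonality
  have horth : ∀ i i' : Fin k, (∑ s : Fin k → Bool, sg (s i) * sg (s i'))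
      = if i = i' then (2:ℝ)^k else 0 := by
    intro i i'
    by_cases hii : i = i'
    · subst hii
      rw [if_pos rfl]
      rw [Finset.sum_congr rfl (fun s _ => sg_sq (s i))]
      rw [Finset.sum_const, nsmul_eq_mul, hcard, mul_one]
    · rw [if_neg hii]
      have hinv : Function.Involutive (fun s : Fin k → Bool => Function.update s i (!(s i))) :=
        flip_invol i
      have hsumfl := Function.Bijective.sum_comp hinv.bijective (fun s => sg (s i) * sg (s i'))
      have hperm : ∀ s : Fin k → Bool,
          sg (Function.update s i (!(s i)) i) * sg (Function.update s i (!(s i)) i')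
            = -(sg (s i) * sg (s i')) := by
        intro s
        rw [Function.update_self, Function.update_of_ne (fun h => hii h.symm), sg_not]
        ring
      rw [Finset.sum_congr rfl (fun s _ => hperm s), Finset.sum_neg_distrib] at hsumfl
      linarith
  -- contraction application
  have hHle : ∀ w : Fin k → Bool,
      H w ≤ (2:ℝ)^k * ((1/(k:ℝ)) * Real.sqrt (∑ i, χ w i * rn i ^2)) := by
    intro w
    set x : Fin k → (Fin D → ℝ) → ℝ := fun i u => (1/(k:ℝ)) * (χ w i * dot (A i) u) with hx
    have hxB : ∀ i, ∀ u ∈ U, |x i u| ≤ (1/(k:ℝ)) * (χ w i * rn i) := by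
      intro i u hu
      simp only [hx]
      rw [abs_mul, abs_mul, abs_of_nonneg (hχ0 w i), abs_of_nonneg (by positivity : (0:ℝ) ≤ 1/(k:ℝ))]
      exact mul_le_mul_of_nonneg_left
        (mul_le_mul_of_nonneg_left (hrow i u hu) (hχ0 w i)) (by positivity)
    have hcon := contraction hUne x _ hxB
    have hid1 : ∀ s : Fin k → Bool, SupA (fun i => sg (s i) * χ w i)
        = sSup ((fun u => ∑ i, sg (s i) * |x i u|) '' U) := by
      intro s
      simp only [hSupA]
      congr 1
      have hfeq : valA (fun i => sg (s i) * χ w i) = fun u => ∑ i, sg (s i) * |x i u| := by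
        funext u
        simp only [hvalA, hx]
        rw [Finset.mul_sum]
        apply Finset.sum_congr rfl; intro i _
        rw [abs_mul, abs_mul, abs_of_nonneg (hχ0 w i),
          abs_of_nonneg (by positivity : (0:ℝ) ≤ 1/(k:ℝ))]
        ring
      rw [hfeq]
    set Nv : (Fin k → Bool) → ℝ :=
      fun s => l2norm (fun j => (1/(k:ℝ)) * ∑ i, (sg (s i) * χ w i) * A i j) with hNv
    have hlin : ∀ s : Fin k → Bool, sSup ((fun u => ∑ i, sg (s i) * x i u) '' U) ≤ Nv s := by
      intro s
      apply csSup_le (hUne.image _)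
      rintro y ⟨u, hu, rfl⟩
      have hveq : ∑ i, sg (s i) * x i u
          = dot (fun j => (1/(k:ℝ)) * ∑ i, (sg (s i) * χ w i) * A i j) u := by
        rw [dot]
        calc ∑ i, sg (s i) * x i u
            = (1/(k:ℝ)) * ∑ i, (sg (s i) * χ w i) * dot (A i) u := by
              rw [Finset.mul_sum]; apply Finset.sum_congr rfl; intro i _
              simp only [hx]; ring
          _ = (1/(k:ℝ)) * ∑ i, ∑ j, (sg (s i) * χ w i) * A i j * u j := by
              congr 1; apply Finset.sum_congr rfl; intro i _
              rw [dot, Finset.mul_sum]; apply Finset.sum_congr rfl; intro j _; ring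
          _ = (1/(k:ℝ)) * ∑ j, ∑ i, (sg (s i) * χ w i) * A i j * u j := by rw [Finset.sum_comm]
          _ = ∑ j, ((1/(k:ℝ)) * ∑ i, (sg (s i) * χ w i) * A i j) * u j := by
              rw [Finset.mul_sum]; apply Finset.sum_congr rfl; intro j _
              rw [mul_assoc, Finset.sum_mul]
      show (∑ i, sg (s i) * x i u) ≤ Nv s
      rw [hveq]
      calc dot _ u ≤ |dot _ u| := le_abs_self _
        _ ≤ l2norm (fun j => (1/(k:ℝ)) * ∑ i, (sg (s i) * χ w i) * A i j) * l2norm u := dot_le _ u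
        _ = Nv s := by rw [show l2norm u = 1 from hu, mul_one, hNv]
    have hNv2 : ∑ s : Fin k → Bool, (Nv s)^2
        = (2:ℝ)^k * ((1/(k:ℝ))^2 * ∑ i, χ w i * rn i ^2) := by
      have hsq : ∀ s : Fin k → Bool,
          (Nv s)^2 = ∑ j, ((1/(k:ℝ)) * ∑ i, (sg (s i) * χ w i) * A i j)^2 := by
        intro s; simp only [hNv, l2norm]; rw [Real.sq_sqrt (by positivity)]
      rw [Finset.sum_congr rfl (fun s _ => hsq s), Finset.sum_comm]
      have hin : ∀ j : Fin D, ∑ s : Fin k → Bool, ((1/(k:ℝ)) * ∑ i, (sg (s i) * χ w i) * A i j)^2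
          = (2:ℝ)^k * ((1/(k:ℝ))^2 * ∑ i, (χ w i * A i j)^2) := by
        intro j
        have hexpand : ∀ s : Fin k → Bool,
            ((1/(k:ℝ)) * ∑ i, (sg (s i) * χ w i) * A i j)^2
              = (1/(k:ℝ))^2 * ∑ i, ∑ i',
                  (sg (s i) * sg (s i')) * ((χ w i * A i j) * (χ w i' * A i' j)) := by
          intro s
          rw [mul_pow, pow_two (∑ i, (sg (s i) * χ w i) * A i j), Finset.sum_mul_sum]
          congr 1
          apply Finset.sum_congr rfl; intro i _
          apply Finset.sum_congr rfl; intro i' _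
          ring
        rw [Finset.sum_congr rfl (fun s _ => hexpand s), ← Finset.mul_sum]
        have h11 : ∑ s : Fin k → Bool, ∑ i, ∑ i',
              (sg (s i) * sg (s i')) * ((χ w i * A i j) * (χ w i' * A i' j))
            = ∑ i, ∑ i', (∑ s : Fin k → Bool, sg (s i) * sg (s i'))
                * ((χ w i * A i j) * (χ w i' * A i' j)) := by
          rw [Finset.sum_comm]
          apply Finset.sum_congr rfl; intro i _
          rw [Finset.sum_comm]
          apply Finset.sum_congr rfl; intro i' _
          rw [Finset.sum_mul]
        rw [h11]
        have h12 : ∑ i, ∑ i', (∑ s : Fin k → Bool, sg (s i) * sg (s i'))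
              * ((χ w i * A i j) * (χ w i' * A i' j))
            = (2:ℝ)^k * ∑ i, (χ w i * A i j)^2 := by
          rw [Finset.mul_sum]
          apply Finset.sum_congr rfl; intro i _
          rw [Finset.sum_eq_single i]
          · rw [horth i i, if_pos rfl]; ring
          · intro i' _ hne
            rw [horth i i', if_neg (fun h => hne h.symm), zero_mul]
          · intro h; exact absurd (Finset.mem_univ i) h
        rw [h12]
        ring
      rw [Finset.sum_congr rfl (fun j _ => hin j)]
      rw [← Finset.mul_sum, ← Finset.mul_sum]
      congr 1
      congr 1
      rw [Finset.sum_comm]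
      apply Finset.sum_congr rfl; intro i _
      have hχsq : (χ w i)^2 = χ w i := by
        simp only [hχ]; split <;> norm_num
      calc ∑ j, (χ w i * A i j)^2 = ∑ j, (χ w i) * (A i j)^2 := by
            apply Finset.sum_congr rfl; intro j _
            rw [mul_pow, hχsq]
        _ = χ w i * rn i ^2 := by rw [← Finset.mul_sum, hrnsq i]
    have hNvnn : ∀ s, 0 ≤ Nv s := fun s => Real.sqrt_nonneg _
    have hCS : ∑ s : Fin k → Bool, Nv s
        ≤ Real.sqrt ((2:ℝ)^k) * Real.sqrt (∑ s : Fin k → Bool, (Nv s)^2) := by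
      have h13 := Real.sum_sqrt_mul_sqrt_le (Finset.univ : Finset (Fin k → Bool))
        (f := fun _ => (1:ℝ)) (g := fun s => (Nv s)^2) (fun _ => zero_le_one)
        (fun s => sq_nonneg _)
      have h14 : ∀ s : Fin k → Bool, Real.sqrt ((1:ℝ)) * Real.sqrt ((Nv s)^2) = Nv s := by
        intro s
        rw [Real.sqrt_one, one_mul, Real.sqrt_sq (hNvnn s)]
      rw [Finset.sum_congr rfl (fun s _ => h14 s)] at h13
      calc ∑ s : Fin k → Bool, Nv s ≤ Real.sqrt (∑ _s : Fin k → Bool, (1:ℝ))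
            * Real.sqrt (∑ s : Fin k → Bool, (Nv s)^2) := h13
        _ = Real.sqrt ((2:ℝ)^k) * Real.sqrt (∑ s : Fin k → Bool, (Nv s)^2) := by
            rw [Finset.sum_const, nsmul_eq_mul, hcard, mul_one]
    calc H w = ∑ s : Fin k → Bool, sSup ((fun u => ∑ i, sg (s i) * |x i u|) '' U) := by
          rw [hH]; exact Finset.sum_congr rfl (fun s _ => hid1 s)
      _ ≤ ∑ s : Fin k → Bool, sSup ((fun u => ∑ i, sg (s i) * x i u) '' U) := hcon
      _ ≤ ∑ s : Fin k → Bool, Nv s := Finset.sum_le_sum (fun s _ => hlin s)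
      _ ≤ Real.sqrt ((2:ℝ)^k) * Real.sqrt (∑ s : Fin k → Bool, (Nv s)^2) := hCS
      _ = (2:ℝ)^k * ((1/(k:ℝ)) * Real.sqrt (∑ i, χ w i * rn i ^2)) := by
          rw [hNv2, Real.sqrt_mul hpow.le,
            Real.sqrt_mul (by positivity : (0:ℝ) ≤ (1/(k:ℝ))^2),
            Real.sqrt_sq (by positivity : (0:ℝ) ≤ 1/(k:ℝ)), ← mul_assoc,
            Real.mul_self_sqrt hpow.le]
  -- aggregation over the double sum
  set EF2 : ℝ := ∑ w : Fin k → Bool, ∑ w' : Fin k → Bool, (M w * M w') * F2 w w' with hEF2d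
  set GG : (Fin k → Bool) → ℝ := fun w => (1/(k:ℝ)) * Real.sqrt (∑ i, χ w i * rn i ^2) with hGG
  have hMMsum : ∑ w : Fin k → Bool, ∑ w' : Fin k → Bool, (M w * M w') * (H w + H w')
      = 2 * ∑ w : Fin k → Bool, M w * H w := by
    have hrow2 : ∀ w : Fin k → Bool, ∑ w' : Fin k → Bool, (M w * M w') * (H w + H w')
        = M w * H w + M w * (∑ w' : Fin k → Bool, M w' * H w') := by
      intro w
      have hper : ∀ w' : Fin k → Bool, (M w * M w') * (H w + H w')
          = (M w * H w) * M w' + M w * (M w' * H w') := by intro w'; ring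
      rw [Finset.sum_congr rfl (fun w' _ => hper w'), Finset.sum_add_distrib,
        ← Finset.mul_sum, ← Finset.mul_sum, hsumM, mul_one]
    rw [Finset.sum_congr rfl (fun w _ => hrow2 w), Finset.sum_add_distrib]
    have h26 : (∑ w : Fin k → Bool, M w * (∑ w' : Fin k → Bool, M w' * H w'))
        = (∑ w : Fin k → Bool, M w) * (∑ w' : Fin k → Bool, M w' * H w') :=
      (Finset.sum_mul _ _ _).symm
    rw [h26, hsumM, one_mul]
    ring
  have hEF2le : EF2 ≤ 2 * ∑ w : Fin k → Bool, M w * GG w := by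
    have h20 : (2:ℝ)^k * EF2
        = ∑ s : Fin k → Bool, ∑ w : Fin k → Bool, ∑ w' : Fin k → Bool,
            (M w * M w') * SupA (fun i => sg (s i) * (χ w i - χ w' i)) := by
      rw [Finset.sum_congr rfl (fun s (_ : s ∈ Finset.univ) => (hsym s).symm)]
      rw [Finset.sum_const, nsmul_eq_mul, hcard]
    have h21 : ∑ s : Fin k → Bool, ∑ w : Fin k → Bool, ∑ w' : Fin k → Bool,
            (M w * M w') * SupA (fun i => sg (s i) * (χ w i - χ w' i))
        = ∑ w : Fin k → Bool, ∑ w' : Fin k → Bool,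
            (M w * M w') * (∑ s : Fin k → Bool, SupA (fun i => sg (s i) * (χ w i - χ w' i))) := by
      rw [Finset.sum_comm]
      apply Finset.sum_congr rfl; intro w _
      rw [Finset.sum_comm]
      apply Finset.sum_congr rfl; intro w' _
      rw [Finset.mul_sum]
    have h22 : (2:ℝ)^k * EF2 ≤ ∑ w : Fin k → Bool, ∑ w' : Fin k → Bool,
        (M w * M w') * (H w + H w') := by
      rw [h20, h21]
      apply Finset.sum_le_sum; intro w _
      apply Finset.sum_le_sum; intro w' _
      exact mul_le_mul_of_nonneg_left (hsub w w') (mul_nonneg (hM0 w) (hM0 w'))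
    rw [hMMsum] at h22
    have h23 : ∑ w : Fin k → Bool, M w * H w
        ≤ ∑ w : Fin k → Bool, M w * ((2:ℝ)^k * GG w) := by
      apply Finset.sum_le_sum; intro w _
      exact mul_le_mul_of_nonneg_left (hHle w) (hM0 w)
    have h24 : ∑ w : Fin k → Bool, M w * ((2:ℝ)^k * GG w)
        = (2:ℝ)^k * ∑ w : Fin k → Bool, M w * GG w := by
      rw [Finset.mul_sum]
      apply Finset.sum_congr rfl; intro w _; ring
    have h25 : (2:ℝ)^k * EF2 ≤ (2:ℝ)^k * (2 * ∑ w : Fin k → Bool, M w * GG w) := by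
      calc (2:ℝ)^k * EF2 ≤ 2 * ∑ w : Fin k → Bool, M w * H w := h22
        _ ≤ 2 * ((2:ℝ)^k * ∑ w : Fin k → Bool, M w * GG w) := by
            rw [← h24]; exact mul_le_mul_of_nonneg_left h23 (by norm_num)
        _ = (2:ℝ)^k * (2 * ∑ w : Fin k → Bool, M w * GG w) := by ring
    exact le_of_mul_le_mul_left h25 hpow
  -- step 6
  have hstep6 : ∑ w : Fin k → Bool, M w * GG w
      ≤ (1/(k:ℝ)) * Real.sqrt (ε * ((k:ℝ) * ((D:ℝ) * lambar^2))) := by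
    have hsum_x : ∑ w : Fin k → Bool, M w * Real.sqrt (∑ i, χ w i * rn i ^2)
        ≤ Real.sqrt (∑ w : Fin k → Bool, M w * (∑ i, χ w i * rn i ^2)) := by
      have hxnn : ∀ w : Fin k → Bool, 0 ≤ ∑ i, χ w i * rn i ^2 :=
        fun w => Finset.sum_nonneg (fun i _ => mul_nonneg (hχ0 w i) (sq_nonneg _))
      have h13 := Real.sum_sqrt_mul_sqrt_le (Finset.univ : Finset (Fin k → Bool))
        (f := fun w => M w) (g := fun w => M w * (∑ i, χ w i * rn i ^2))
        hM0 (fun w => mul_nonneg (hM0 w) (hxnn w))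
      have h14 : ∀ w : Fin k → Bool,
          Real.sqrt (M w) * Real.sqrt (M w * (∑ i, χ w i * rn i ^2))
            = M w * Real.sqrt (∑ i, χ w i * rn i ^2) := by
        intro w
        rw [Real.sqrt_mul (hM0 w), ← mul_assoc, Real.mul_self_sqrt (hM0 w)]
      rw [Finset.sum_congr rfl (fun w _ => h14 w), hsumM, Real.sqrt_one, one_mul] at h13
      exact h13
    have hxsum : ∑ w : Fin k → Bool, M w * (∑ i, χ w i * rn i ^2) = ∑ i, p i * rn i ^2 := by
      calc ∑ w : Fin k → Bool, M w * (∑ i, χ w i * rn i ^2)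
          = ∑ w : Fin k → Bool, ∑ i, M w * (χ w i * rn i ^2) := by
            apply Finset.sum_congr rfl; intro w _; rw [Finset.mul_sum]
        _ = ∑ i, ∑ w : Fin k → Bool, M w * (χ w i * rn i ^2) := Finset.sum_comm
        _ = ∑ i, (∑ w : Fin k → Bool, M w * χ w i) * rn i ^2 := by
            apply Finset.sum_congr rfl; intro i _
            rw [Finset.sum_mul]
            apply Finset.sum_congr rfl; intro w _; ring
        _ = ∑ i, p i * rn i ^2 := by
            apply Finset.sum_congr rfl; intro i _
            rw [hmargχ i]
    have hplt : ∑ i, p i * rn i ^2 ≤ ε * ((k:ℝ) * ((D:ℝ) * lambar^2)) := by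
      have h30 : ∑ i, p i * rn i ^2 ≤ ε * ∑ i, rn i ^2 := by
        rw [Finset.mul_sum]
        apply Finset.sum_le_sum; intro i _
        exact mul_le_mul_of_nonneg_right (hpε i) (sq_nonneg _)
      have h31 : ∑ i, rn i ^2 ≤ (k:ℝ) * ((D:ℝ) * lambar^2) := by
        calc ∑ i, rn i ^2 = ∑ i, ∑ j, A i j^2 :=
              Finset.sum_congr rfl (fun i _ => hrnsq i)
          _ = ∑ j, ∑ i, A i j^2 := Finset.sum_comm
          _ ≤ ∑ _j : Fin D, (k:ℝ) * lambar^2 := by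
              apply Finset.sum_le_sum; intro j _
              have h32 := hC3 (e j) (hel2 j)
              have h33 : ∑ i, A i j^2 = ∑ i, |dot (A i) (e j)|^2 := by
                apply Finset.sum_congr rfl; intro i _; rw [hedot i j, sq_abs]
              rw [h33]
              have h34 := mul_le_mul_of_nonneg_left h32 hkR.le
              calc ∑ i, |dot (A i) (e j)|^2
                  = (k:ℝ) * ((1/(k:ℝ)) * ∑ i, |dot (A i) (e j)|^2) := by
                    field_simp
                _ ≤ (k:ℝ) * lambar^2 := h34
          _ = (k:ℝ) * ((D:ℝ) * lambar^2) := by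
              rw [Finset.sum_const, nsmul_eq_mul, Finset.card_univ, Fintype.card_fin]
              ring
      calc ∑ i, p i * rn i ^2 ≤ ε * ∑ i, rn i ^2 := h30
        _ ≤ ε * ((k:ℝ) * ((D:ℝ) * lambar^2)) := mul_le_mul_of_nonneg_left h31 hε0
    calc ∑ w : Fin k → Bool, M w * GG w
        = (1/(k:ℝ)) * ∑ w : Fin k → Bool, M w * Real.sqrt (∑ i, χ w i * rn i ^2) := by
          rw [Finset.mul_sum]
          apply Finset.sum_congr rfl; intro w _
          rw [hGG]; ring
      _ ≤ (1/(k:ℝ)) * Real.sqrt (∑ w : Fin k → Bool, M w * (∑ i, χ w i * rn i ^2)) :=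
          mul_le_mul_of_nonneg_left hsum_x (by positivity)
      _ ≤ (1/(k:ℝ)) * Real.sqrt (ε * ((k:ℝ) * ((D:ℝ) * lambar^2))) := by
          apply mul_le_mul_of_nonneg_left _ (by positivity : (0:ℝ) ≤ 1/(k:ℝ))
          apply Real.sqrt_le_sqrt
          rw [hxsum]
          exact hplt
  have hsqrtid : (1/(k:ℝ)) * Real.sqrt (ε * ((k:ℝ) * ((D:ℝ) * lambar^2)))
      = Real.sqrt ε * (lambar * sqrtDk) := by
    have hid : ε * ((k:ℝ) * ((D:ℝ) * lambar^2))
        = (Real.sqrt ε * (lambar * sqrtDk) * (k:ℝ))^2 := by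
      rw [hsqrtDk, mul_pow, mul_pow, mul_pow, Real.sq_sqrt hε0, Real.sq_sqrt hDkR.le]
      field_simp
    rw [hid, Real.sqrt_sq (by positivity)]
    field_simp
  -- expectation bound
  have hE : ∑ w : Fin k → Bool, M w * T w ≤ 3 * (c * lam) := by
    have hEa : ∑ w : Fin k → Bool, M w * T w
        ≤ ε*(σ*sqrtDk) + ∑ w : Fin k → Bool, M w * F w := by
      calc ∑ w : Fin k → Bool, M w * T w
          ≤ ∑ w : Fin k → Bool, M w * (ε*(σ*sqrtDk) + F w) :=
            Finset.sum_le_sum (fun w _ => mul_le_mul_of_nonneg_left (hTF w) (hM0 w))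
        _ = (∑ w : Fin k → Bool, M w) * (ε*(σ*sqrtDk)) + ∑ w : Fin k → Bool, M w * F w := by
            rw [Finset.sum_mul, ← Finset.sum_add_distrib]
            apply Finset.sum_congr rfl; intro w _; ring
        _ = ε*(σ*sqrtDk) + ∑ w : Fin k → Bool, M w * F w := by rw [hsumM, one_mul]
    have hEb : ∑ w : Fin k → Bool, M w * F w ≤ 2 * (Real.sqrt ε * (lambar * sqrtDk)) := by
      calc ∑ w : Fin k → Bool, M w * F w ≤ EF2 := hEF2
        _ ≤ 2 * ∑ w : Fin k → Bool, M w * GG w := hEF2le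
        _ ≤ 2 * ((1/(k:ℝ)) * Real.sqrt (ε * ((k:ℝ) * ((D:ℝ) * lambar^2)))) := by
            exact mul_le_mul_of_nonneg_left hstep6 (by norm_num)
        _ = 2 * (Real.sqrt ε * (lambar * sqrtDk)) := by rw [hsqrtid]
    have hsqε : Real.sqrt ε ≤ 1 := by
      rw [show (1:ℝ) = Real.sqrt 1 by rw [Real.sqrt_one]]
      exact Real.sqrt_le_sqrt (le_trans hεc hc1)
    have h40 : Real.sqrt ε * (lambar * sqrtDk) ≤ 1 * (c*(lam*(1-ε))) :=
      mul_le_mul hsqε hbar (by positivity) zero_le_one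
    have h41 : c*(lam*(1-ε)) ≤ c*lam := by nlinarith
    calc ∑ w : Fin k → Bool, M w * T w
        ≤ ε*(σ*sqrtDk) + ∑ w : Fin k → Bool, M w * F w := hEa
      _ ≤ ε*(σ*sqrtDk) + 2 * (Real.sqrt ε * (lambar * sqrtDk)) := by linarith
      _ ≤ 3 * (c * lam) := by linarith [h40, h41, hepsterm]
  -- Markov
  set Bad : Set (Fin k → Bool) := {w | lam/4 < T w} with hBad
  have hGBad : G = Badᶜ := by
    rw [hG, hBad]; ext w; simp [not_lt]
  have hmarkov : ν Bad ≤ ENNReal.ofReal δ := by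
    have h50 : ν Bad = ∑ w ∈ Finset.univ.filter (fun w => w ∈ Bad), ν {w} :=
      measure_cube_set ν Bad
    have h51 : ∀ w ∈ Finset.univ.filter (fun w : Fin k → Bool => w ∈ Bad),
        ν {w} ≤ ENNReal.ofReal ((M w * T w) / (lam/4)) := by
      intro w hw
      rw [hνsing w]
      apply ENNReal.ofReal_le_ofReal
      have hTw : lam/4 < T w := (Finset.mem_filter.mp hw).2
      rw [le_div_iff₀ (by positivity : (0:ℝ) < lam/4)]
      exact mul_le_mul_of_nonneg_left hTw.le (hM0 w)
    calc ν Bad = ∑ w ∈ Finset.univ.filter (fun w => w ∈ Bad), ν {w} := h50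
      _ ≤ ∑ w ∈ Finset.univ.filter (fun w : Fin k → Bool => w ∈ Bad),
            ENNReal.ofReal ((M w * T w) / (lam/4)) := Finset.sum_le_sum h51
      _ ≤ ∑ w : Fin k → Bool, ENNReal.ofReal ((M w * T w) / (lam/4)) :=
          Finset.sum_le_sum_of_subset (Finset.filter_subset _ _)
      _ = ENNReal.ofReal (∑ w : Fin k → Bool, (M w * T w) / (lam/4)) := by
          rw [ENNReal.ofReal_sum_of_nonneg]
          intro w _
          exact div_nonneg (mul_nonneg (hM0 w) (hT0 w)) (by positivity)
      _ ≤ ENNReal.ofReal δ := by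
          apply ENNReal.ofReal_le_ofReal
          rw [← Finset.sum_div, div_le_iff₀ (by positivity : (0:ℝ) < lam/4)]
          calc ∑ w : Fin k → Bool, M w * T w ≤ 3 * (c * lam) := hE
            _ ≤ δ * (lam/4) := by rw [hc]; exact le_of_eq (by ring)
  -- conclusion
  have hGν : ENNReal.ofReal (1-δ) ≤ ν G := by
    rw [hGBad]
    have h60 : ν Badᶜ = 1 - ν Bad := by
      rw [measure_compl (cube_meas Bad) (measure_ne_top _ _), measure_univ]
    rw [h60]
    calc ENNReal.ofReal (1-δ)
        = 1 - ENNReal.ofReal δ := by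
          rw [ENNReal.ofReal_sub _ hδ0.le, ENNReal.ofReal_one]
      _ ≤ 1 - ν Bad := tsub_le_tsub_left hmarkov 1
  calc ENNReal.ofReal (1-δ) ≤ ν G := hGν
    _ = μ (W ⁻¹' G) := by rw [hν]; exact Measure.map_apply hWm (cube_meas G)
    _ ≤ _ := measure_mono (fun z hz => by
        intro vhat hminv
        exact hdet z hz vhat hminv)






end
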